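/- arXiv:1402.7176 — 3 statements merged into one kernel-verified Lean document; each statement's English description precedes it below -/
import Mathlib

section
/- For the unit vector condition n₁ ∈ [-1,1] and angles α ∈ [0,π], β ∈ [-π/2,π/2] satisfying 0 ≤ α+β ≤ π and 0 ≤ α-β ≤ π, if cos α ≠ cos β, then the quantity (2(sin α + n₁ sin β))/(cos α - cos β) is nonpositive. -/
/-! The hypotheses say `|β| ≤ α` and `α + |β| ≤ π`. Sum-to-product then gives `|sin β| ≤ sin α`, so
the numerator is at least `2 (sin α - |sin β|) ≥ 0`, while cosine decreasing on `[0, π]` gives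
`cos α ≤ cos |β| = cos β`. -/

open Real

namespace Real

theorem sin_le_sin_of_sub_nonneg_of_abs_add_le {x y : ℝ} (h₀ : 0 ≤ x - y) (h₁ : x - y ≤ 2 * π)
    (h₂ : |x + y| ≤ π) : sin y ≤ sin x := by
  have hsin : 0 ≤ sin ((x - y) / 2) :=
    sin_nonneg_of_nonneg_of_le_pi (by linarith) (by linarith)
  have hcos : 0 ≤ cos ((x + y) / 2) := by
    obtain ⟨h₂, h₂'⟩ := abs_le.1 h₂
    exact cos_nonneg_of_mem_Icc ⟨by linarith, by linarith⟩
  have : 0 ≤ sin x - sin y := by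
    rw [sin_sub_sin]
    positivity
  linarith

theorem abs_sin_le_sin_of_abs_le {α β : ℝ} (hβα : |β| ≤ α) (hαβ : α + |β| ≤ π) :
    |sin β| ≤ sin α := by
  have hα : α ≤ π := by linarith [abs_nonneg β]
  obtain ⟨hβ, hβ'⟩ := abs_le.1 hβα
  have habs : |α + β| ≤ π := abs_le.2 ⟨by linarith, by linarith [le_abs_self β]⟩
  have habs_neg : |α + -β| ≤ π := abs_le.2 ⟨by linarith, by linarith [neg_abs_le β]⟩
  refine abs_le.2 ⟨?_, sin_le_sin_of_sub_nonneg_of_abs_add_le (by linarith) (by linarith) habs⟩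
  simpa only [sin_neg, neg_le] using
    sin_le_sin_of_sub_nonneg_of_abs_add_le (x := α) (y := -β) (by linarith) (by linarith) habs_neg

theorem cos_le_cos_of_abs_le {α β : ℝ} (hβα : |β| ≤ α) (hα : α ≤ π) : cos α ≤ cos β := by
  simpa only [cos_abs] using cos_le_cos_of_nonneg_of_le_pi (abs_nonneg β) hα hβα

end Real

theorem stmt0_general (n₁ α β : ℝ)
    (hn : n₁ ∈ Set.Icc (-1 : ℝ) 1)
    (h1 : 0 ≤ α + β) (h2 : α + β ≤ π)
    (h3 : 0 ≤ α - β) (h4 : α - β ≤ π) :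
    2 * (Real.sin α + n₁ * Real.sin β) / (Real.cos α - Real.cos β) ≤ 0 := by
  have hβα : |β| ≤ α := abs_le.2 ⟨by linarith, by linarith⟩
  have hαβ : α + |β| ≤ π := by
    rcases abs_choice β with h | h <;> rw [h] <;> linarith
  have hmul : |n₁ * sin β| ≤ |sin β| := by
    rw [abs_mul]
    exact mul_le_of_le_one_left (abs_nonneg _) (abs_le.2 hn)
  have hnum : 0 ≤ 2 * (sin α + n₁ * sin β) := by
    linarith [abs_sin_le_sin_of_abs_le hβα hαβ, neg_abs_le (n₁ * sin β)]
  have hden : cos α - cos β ≤ 0 := by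
    linarith [cos_le_cos_of_abs_le hβα (by linarith)]
  exact div_nonpos_of_nonneg_of_nonpos hnum hden

theorem stmt0 (n₁ α β : ℝ)
    (hn : n₁ ∈ Set.Icc (-1 : ℝ) 1)
    (hα : α ∈ Set.Icc 0 π)
    (hβ : β ∈ Set.Icc (-(π/2)) (π/2))
    (h1 : 0 ≤ α + β) (h2 : α + β ≤ π)
    (h3 : 0 ≤ α - β) (h4 : α - β ≤ π)
    (hne : Real.cos α ≠ Real.cos β) :
    2 * (Real.sin α + n₁ * Real.sin β) / (Real.cos α - Real.cos β) ≤ 0 :=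
  stmt0_general n₁ α β hn h1 h2 h3 h4
end

section
/- Let U = e^{iα}(cos β · I + i sin β (n₁σ₁ + n₂σ₂ + n₃σ₃)) with σᵢ the Pauli matrices and n₁²+n₂²+n₃² = 1. Then det([[1,i],[1,L-i]] - U·[[1,-i],[1,L+i]]) = 2e^{iα}[L(cos α - cos β) - 2(sin α + n₁ sin β)]. -/
/-! Write `D_U = A - U B` with `U = e^{iα} V`, `V = cos β + i sin β (n · σ)`. For 2 × 2 matrices
`det (A - M) = det A - tr (adj A * M) + det M`. Here `det V = cos² β + sin² β |n|² = 1`, and by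
cyclicity `tr (adj A * V B) = tr (B adj A * V)` where `B adj A = L - 2iσ₁`, so only `tr V = 2 cos β` and
`tr (σ₁ V) = 2i n₁ sin β` enter. What is left, `(L - 2i) + e^{2iα} (L + 2i)`, equals
`2 e^{iα} (L cos α - 2 sin α)`. -/

open Complex Matrix

namespace Matrix

variable {R : Type*} [CommRing R]

theorem det_add_fin_two (A M : Matrix (Fin 2) (Fin 2) R) :
    (A + M).det = A.det + (A.adjugate * M).trace + M.det := by
  simp only [det_fin_two, adjugate_fin_two, trace_fin_two, add_apply, mul_apply, Fin.sum_univ_two,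
    of_apply, cons_val', cons_val_zero, cons_val_one, empty_val', cons_val_fin_one]
  ring

theorem det_sub_fin_two (A M : Matrix (Fin 2) (Fin 2) R) :
    (A - M).det = A.det - (A.adjugate * M).trace + M.det := by
  rw [sub_eq_add_neg, det_add_fin_two, det_neg, mul_neg, trace_neg]
  simp only [Fintype.card_fin, even_two, Even.neg_pow, one_pow, one_mul, sub_eq_add_neg]

theorem det_smul_one_add_fin_two (a : R) (M : Matrix (Fin 2) (Fin 2) R) :
    (a • (1 : Matrix (Fin 2) (Fin 2) R) + M).det = a ^ 2 + a * M.trace + M.det := by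
  rw [det_add_fin_two, adjugate_smul, adjugate_one, smul_one_mul, trace_smul, det_smul, det_one]
  simp only [Fintype.card_fin, Nat.add_one_sub_one, pow_one, mul_one, smul_eq_mul]

end Matrix

def pauliDot (n₁ n₂ n₃ : ℝ) : Matrix (Fin 2) (Fin 2) ℂ :=
  (n₁ : ℂ) • !![(0 : ℂ), 1; 1, 0] + (n₂ : ℂ) • !![(0 : ℂ), -I; I, 0] +
    (n₃ : ℂ) • !![(1 : ℂ), 0; 0, -1]

theorem pauliDot_eq (n₁ n₂ n₃ : ℝ) :
    pauliDot n₁ n₂ n₃ = !![(n₃ : ℂ), n₁ - n₂ * I; n₁ + n₂ * I, -n₃] := by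
  ext i j; fin_cases i <;> fin_cases j <;> simp [pauliDot]; ring

theorem trace_pauliDot (n₁ n₂ n₃ : ℝ) : (pauliDot n₁ n₂ n₃).trace = 0 := by
  simp [pauliDot_eq, trace_fin_two_of]

theorem det_pauliDot (n₁ n₂ n₃ : ℝ) :
    (pauliDot n₁ n₂ n₃).det = -((n₁ ^ 2 + n₂ ^ 2 + n₃ ^ 2 : ℝ) : ℂ) := by
  rw [pauliDot_eq, det_fin_two_of]
  push_cast
  linear_combination (n₂ : ℂ) ^ 2 * I_sq

theorem trace_pauliX_mul_pauliDot (n₁ n₂ n₃ : ℝ) :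
    (!![(0 : ℂ), 1; 1, 0] * pauliDot n₁ n₂ n₃).trace = 2 * n₁ := by
  rw [pauliDot_eq, mul_fin_two, trace_fin_two_of]
  ring

noncomputable def spinRotation (β n₁ n₂ n₃ : ℝ) : Matrix (Fin 2) (Fin 2) ℂ :=
  (Real.cos β : ℂ) • 1 + (I * Real.sin β) • pauliDot n₁ n₂ n₃

theorem det_spinRotation {β n₁ n₂ n₃ : ℝ} (hn : n₁ ^ 2 + n₂ ^ 2 + n₃ ^ 2 = 1) :
    (spinRotation β n₁ n₂ n₃).det = 1 := by
  rw [spinRotation, det_smul_one_add_fin_two, trace_smul, trace_pauliDot, det_smul, det_pauliDot,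
    hn]
  have hβ : (Real.cos β : ℂ) ^ 2 + (Real.sin β : ℂ) ^ 2 = 1 := mod_cast Real.cos_sq_add_sin_sq β
  simp only [Fintype.card_fin, smul_zero, ofReal_one]
  linear_combination hβ - (Real.sin β : ℂ) ^ 2 * I_sq

theorem trace_spinRotation (β n₁ n₂ n₃ : ℝ) :
    (spinRotation β n₁ n₂ n₃).trace = 2 * Real.cos β := by
  simp only [spinRotation, trace_add, trace_smul, trace_one, trace_pauliDot, Fintype.card_fin,
    smul_eq_mul, mul_zero, add_zero]
  push_cast
  ring

theorem trace_pauliX_mul_spinRotation (β n₁ n₂ n₃ : ℝ) :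
    (!![(0 : ℂ), 1; 1, 0] * spinRotation β n₁ n₂ n₃).trace = 2 * I * Real.sin β * n₁ := by
  rw [spinRotation, mul_add, mul_smul_comm, mul_smul_comm, trace_add, trace_smul, trace_smul,
    trace_pauliX_mul_pauliDot, mul_one, trace_fin_two_of]
  simp only [smul_eq_mul]
  ring

theorem sub_add_exp_mul_I_sq_mul (L a : ℂ) :
    L - 2 * I + exp (I * a) ^ 2 * (L + 2 * I) = 2 * exp (I * a) * (L * cos a - 2 * sin a) := by
  rw [mul_comm I, exp_mul_I]
  linear_combination (2 * I - L) * cos_sq_add_sin_sq a +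
    sin a * (L * sin a + 4 * cos a + 2 * I * sin a) * I_sq

theorem det_zeroModeSystem (L e : ℂ) (U : Matrix (Fin 2) (Fin 2) ℂ) :
    (!![(1 : ℂ), I; 1, L - I] - (e • U) * !![(1 : ℂ), -I; 1, L + I]).det =
      (L - 2 * I) - e * (L * U.trace - 2 * I * (!![(0 : ℂ), 1; 1, 0] * U).trace) +
        e ^ 2 * U.det * (L + 2 * I) := by
  have hB : !![(1 : ℂ), -I; 1, L + I] * (!![(1 : ℂ), I; 1, L - I]).adjugate =
      L • 1 - (2 * I) • !![(0 : ℂ), 1; 1, 0] := by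
    rw [adjugate_fin_two_of]
    ext i j; fin_cases i <;> fin_cases j <;> simp <;> ring
  rw [det_sub_fin_two, smul_mul_assoc, mul_smul_comm, trace_smul, det_smul, det_mul,
    trace_mul_comm, mul_assoc, trace_mul_comm, hB, sub_mul, trace_sub, smul_mul_assoc,
    smul_mul_assoc, one_mul, trace_smul, trace_smul, det_fin_two_of, det_fin_two_of]
  simp only [Fintype.card_fin, smul_eq_mul]
  ring

theorem stmt5_general (L α β n₁ n₂ n₃ : ℝ)
    (hn : n₁ ^ 2 + n₂ ^ 2 + n₃ ^ 2 = 1) :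
    (!![(1 : ℂ), I; 1, (L : ℂ) - I] -
        (Complex.exp (I * α) •
          ((Real.cos β : ℂ) • (1 : Matrix (Fin 2) (Fin 2) ℂ) +
            (I * (Real.sin β : ℂ)) •
              ((n₁ : ℂ) • !![(0 : ℂ), 1; 1, 0] +
               (n₂ : ℂ) • !![(0 : ℂ), -I; I, 0] +
               (n₃ : ℂ) • !![(1 : ℂ), 0; 0, -1]))) *
          !![(1 : ℂ), -I; 1, (L : ℂ) + I]).det =
      2 * Complex.exp (I * α) *
        ((L * (Real.cos α - Real.cos β) - 2 * (Real.sin α + n₁ * Real.sin β) : ℝ) : ℂ) := by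
  change (_ - (_ • spinRotation β n₁ n₂ n₃) * _).det = _
  rw [det_zeroModeSystem, det_spinRotation hn, trace_spinRotation, trace_pauliX_mul_spinRotation,
    mul_one]
  push_cast
  linear_combination sub_add_exp_mul_I_sq_mul L α + 4 * exp (I * α) * sin β * n₁ * I_sq

theorem stmt5 (L α β n₁ n₂ n₃ : ℝ) (hL : 0 < L)
    (hn : n₁ ^ 2 + n₂ ^ 2 + n₃ ^ 2 = 1) :
    (!![(1 : ℂ), I; 1, (L : ℂ) - I] -
        (Complex.exp (I * α) •
          ((Real.cos β : ℂ) • (1 : Matrix (Fin 2) (Fin 2) ℂ) +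
            (I * (Real.sin β : ℂ)) •
              ((n₁ : ℂ) • !![(0 : ℂ), 1; 1, 0] +
               (n₂ : ℂ) • !![(0 : ℂ), -I; I, 0] +
               (n₃ : ℂ) • !![(1 : ℂ), 0; 0, -1]))) *
          !![(1 : ℂ), -I; 1, (L : ℂ) + I]).det =
      2 * Complex.exp (I * α) *
        ((L * (Real.cos α - Real.cos β) - 2 * (Real.sin α + n₁ * Real.sin β) : ℝ) : ℂ) :=
  stmt5_general L α β n₁ n₂ n₃ hn
end

section
/- For the unitary matrix U_VNK = (1/(L+2i))·[[L, 2i],[2i, L]] with L > 0, writing U_VNK = e^{iα}(cos β · I + i sin β · σ₁) requires β = arctan(2/L) and α = -arctan(2/L); in particular α < 0, so U_VNK does not satisfy the constraint 0 ≤ α ± β ≤ π defining M_F, for any L > 0. -/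
/-!
Comparing the diagonal and off-diagonal entries gives `w cos β = L` and `w sin β = 2` with
`w = e^{iα} (L + 2i)`. Eliminating `w` gives `L sin β = 2 cos β`, which forces `cos β > 0` and
hence `β = arctan (2 / L)`. Adding the two equations gives `e^{i(α+β)} (L + 2i) = L + 2i`, so
`α + β ∈ 2πℤ`, and the ranges of `α` and `β` leave only `α + β = 0`.
-/

open Complex Matrix Real

theorem Matrix.eq_smul_one_add_smul_pauliX_iff {R : Type*} [CommRing R] (a b c x y : R) :
    !![a, b; b, a] = c • (x • (1 : Matrix (Fin 2) (Fin 2) R) + y • !![0, 1; 1, 0]) ↔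
      a = c * x ∧ b = c * y := by
  constructor
  · intro h
    exact ⟨by simpa using congrFun (congrFun h 0) 0, by simpa using congrFun (congrFun h 0) 1⟩
  · rintro ⟨rfl, rfl⟩
    ext i j
    fin_cases i <;> fin_cases j <;> simp

theorem Complex.mul_sin_eq_mul_cos_of_mul_cos_of_mul_sin {w : ℂ} {x y β : ℝ}
    (hx : w * (Real.cos β : ℂ) = x) (hy : w * (Real.sin β : ℂ) = y) :
    x * Real.sin β = y * Real.cos β := by
  have h : ((x * Real.sin β : ℝ) : ℂ) = (y * Real.cos β : ℝ) := by
    rw [ofReal_mul, ofReal_mul, ← hx, ← hy]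
    ring
  exact_mod_cast h

theorem Real.eq_arctan_of_mul_sin_eq_mul_cos {a b β : ℝ} (ha : 0 < a)
    (hβ : β ∈ Set.Icc (-(π / 2)) (π / 2)) (h : a * sin β = b * cos β) :
    β = arctan (b / a) := by
  have hcos : cos β ≠ 0 := by
    intro hc
    have hs : sin β = 0 := by
      simpa [hc, ha.ne'] using h
    simpa [hc, hs] using sin_sq_add_cos_sq β
  have hlo : -(π / 2) < β := by
    refine lt_of_le_of_ne hβ.1 ?_
    rintro rfl
    simp at hcos
  have hhi : β < π / 2 := by
    refine lt_of_le_of_ne hβ.2 ?_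
    rintro rfl
    simp at hcos
  refine (arctan_eq_of_tan_eq ?_ ⟨hlo, hhi⟩).symm
  rw [tan_eq_sin_div_cos, div_eq_div_iff hcos ha.ne']
  linarith

theorem Real.eq_zero_of_exp_mul_I_eq_one {θ : ℝ} (h₁ : -(2 * π) < θ) (h₂ : θ < 2 * π)
    (h : Complex.exp (θ * I) = 1) : θ = 0 :=
  (cos_eq_one_iff_of_lt_of_lt h₁ h₂).mp (by rw [← exp_ofReal_mul_I_re, h, one_re])

theorem stmt17 (L : ℝ) (hL : 0 < L) :
    (∀ α β : ℝ, α ∈ Set.Icc (-π) π → β ∈ Set.Icc (-(π/2)) (π/2) →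
      (((L : ℂ) + 2 * I)⁻¹ • !![(L : ℂ), 2 * I; 2 * I, (L : ℂ)] =
        Complex.exp (I * α) •
          ((Real.cos β : ℂ) • (1 : Matrix (Fin 2) (Fin 2) ℂ) +
            (I * (Real.sin β : ℂ)) • !![(0 : ℂ), 1; 1, 0])) →
      β = Real.arctan (2 / L) ∧ α = -Real.arctan (2 / L)) ∧
    (-Real.arctan (2 / L) < 0) ∧
    ¬(0 ≤ -Real.arctan (2 / L) + Real.arctan (2 / L) ∧
      -Real.arctan (2 / L) + Real.arctan (2 / L) ≤ π ∧
      0 ≤ -Real.arctan (2 / L) - Real.arctan (2 / L) ∧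
      -Real.arctan (2 / L) - Real.arctan (2 / L) ≤ π) := by
  have harctan : 0 < Real.arctan (2 / L) := arctan_pos.mpr (by positivity)
  refine ⟨fun α β hα hβ heq => ?_, by linarith, fun h => by linarith [h.2.2.1]⟩
  set z : ℂ := L + 2 * I
  have hz : z ≠ 0 := fun h => by simpa [z] using congrArg Complex.im h
  set w := z * Complex.exp (I * α)
  rw [inv_smul_eq_iff₀ hz, smul_smul, eq_smul_one_add_smul_pauliX_iff] at heq
  obtain ⟨hcos, hsin⟩ := heq
  have hsin' : w * (Real.sin β : ℂ) = 2 := by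
    refine mul_left_cancel₀ I_ne_zero ?_
    linear_combination -hsin
  have hβ' : β = Real.arctan (2 / L) := eq_arctan_of_mul_sin_eq_mul_cos hL hβ
    (mul_sin_eq_mul_cos_of_mul_cos_of_mul_sin (x := L) hcos.symm (by exact_mod_cast hsin'))
  have hrot : z * Complex.exp ((α + β : ℝ) * I) = z := by
    have hsplit : Complex.exp ((α + β : ℝ) * I) = Complex.exp (I * α) * Complex.exp (β * I) := by
      rw [← Complex.exp_add]
      push_cast
      ring_nf
    rw [hsplit, Complex.exp_mul_I, ← ofReal_cos, ← ofReal_sin]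
    linear_combination -hcos + I * hsin'
  have hsum : α + β = 0 := eq_zero_of_exp_mul_I_eq_one
    (by linarith [pi_pos, hα.1, hβ.1]) (by linarith [pi_pos, hα.2, hβ.2])
    ((mul_eq_left₀ hz).mp hrot)
  exact ⟨hβ', by linarith⟩
end
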